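/- Let G be a group normally generated by a single element x. Then the Milnor group MG (the quotient of G by the normal closure of all [x, x^y], y ∈ G) is abelian. -/

import Mathlib

/-!
In the Milnor group the image of `x` commutes with each of its conjugates. Since these conjugates
generate the group, the image of `x` is central; the center is then a normal subgroup containing
the normal generator, hence everything.
-/

namespace Subgroup

variable {G : Type*} [Group G] {x : G}

theorem normalClosure_singleton_le_centralizer (hx : ∀ y, IsConj x y → Commute x y) :
    normalClosure {x} ≤ centralizer {x} := by
  refine closure_le _ |>.mpr fun y hy ↦ ?_
  obtain ⟨_, rfl, hxy⟩ := Group.mem_conjugatesOfSet_iff.mp hy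
  exact mem_centralizer_singleton_iff.mpr (hx y hxy).eq.symm

theorem mem_center_of_forall_isConj_commute (hgen : normalClosure {x} = ⊤)
    (hx : ∀ y, IsConj x y → Commute x y) : x ∈ center G :=
  mem_center_iff.mpr fun g ↦ mem_centralizer_singleton_iff.mp
    (normalClosure_singleton_le_centralizer hx (hgen ▸ mem_top g))

theorem center_eq_top_of_forall_isConj_commute (hgen : normalClosure {x} = ⊤)
    (hx : ∀ y, IsConj x y → Commute x y) : center G = ⊤ :=
  top_unique <| hgen ▸ normalClosure_le_normal
    (Set.singleton_subset_iff.mpr (mem_center_of_forall_isConj_commute hgen hx))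

theorem normalClosure_map_singleton_eq_top {H : Type*} [Group H] {f : G →* H}
    (hf : Function.Surjective f) (hgen : normalClosure {x} = ⊤) :
    normalClosure {f x} = ⊤ := by
  rw [← Set.image_singleton, ← map_normalClosure _ _ hf, hgen, ← MonoidHom.range_eq_map,
    MonoidHom.range_eq_top.mpr hf]

end Subgroup

section Milnor

variable {G : Type*} [Group G]

/-- The relators `[x, x^y]` of the Milnor group `G ⧸ ⟪milnorRelators x⟫`. -/
def milnorRelators (x : G) : Set G :=
  {g | ∃ y : G, g = x⁻¹ * (y⁻¹ * x * y)⁻¹ * x * (y⁻¹ * x * y)}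

theorem commute_mk_of_isConj_mk {x : G} {N : Subgroup G} [N.Normal] (hN : milnorRelators x ⊆ N)
    {q : G ⧸ N} (hq : IsConj (x : G ⧸ N) q) : Commute (x : G ⧸ N) q := by
  obtain ⟨c, rfl⟩ := isConj_iff.mp hq
  obtain ⟨y, rfl⟩ := QuotientGroup.mk_surjective c
  have hrel : x⁻¹ * (y * x * y⁻¹)⁻¹ * x * (y * x * y⁻¹) ∈ N := hN ⟨y⁻¹, by rw [inv_inv]⟩
  have hmk : ((y * x * y⁻¹ * x : G) : G ⧸ N) = ((x * (y * x * y⁻¹) : G) : G ⧸ N) :=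
    QuotientGroup.eq.mpr <| by convert hrel using 1; group
  simpa only [Commute, SemiconjBy, QuotientGroup.mk_mul, QuotientGroup.mk_inv] using hmk.symm

end Milnor

/-- If `G` is normally generated by a single element `x`, then the Milnor group
`MG = G/⟪[x, x^y] : y ∈ G⟫` (with `x^y = y⁻¹xy` and `[a,b] = a⁻¹b⁻¹ab`) is abelian. -/
theorem milnorGroup_of_one_normal_generator_abelian {G : Type*} [Group G] (x : G)
    (hgen : Subgroup.normalClosure {x} = ⊤) :
    ∀ a b : G ⧸ Subgroup.normalClosure
        {g : G | ∃ y : G, g = x⁻¹ * (y⁻¹ * x * y)⁻¹ * x * (y⁻¹ * x * y)},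
      a * b = b * a := by
  have hcenter : Subgroup.center (G ⧸ Subgroup.normalClosure (milnorRelators x)) = ⊤ :=
    Subgroup.center_eq_top_of_forall_isConj_commute
      (Subgroup.normalClosure_map_singleton_eq_top (QuotientGroup.mk'_surjective _) hgen)
      fun _ ↦ commute_mk_of_isConj_mk Subgroup.subset_normalClosure
  exact fun a b ↦ Subgroup.mem_center_iff.mp (hcenter ▸ Subgroup.mem_top b) a
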